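/- There exists a constant C > 0 such that for every complex-valued function g that is twice continuously differentiable on [0,1], ∫₀¹ |(d/dr)(r·g(r))|²·(1/r) dr ≤ C·(∫₀¹ ((1−r²)/r)·|(d/dr)(r·g(r))|² dr)^{2/3}·(∫₀¹ |(𝓛g)(r)|²·r dr)^{1/3} + C·∫₀¹ ((1−r²)/r)·|(d/dr)(r·g(r))|² dr, where all quantities are interpreted in [0,+∞]. (Lemma A.4, second weighted interpolation inequality.) -/

import Mathlib

open MeasureTheory Filter

/-- One-sided derivative on `(0,1]`. -/
noncomputable def dz (g : ℝ → ℂ) : ℝ → ℂ := derivWithin g (Set.Ioc 0 1)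

/-- The operator `(𝓛 g)(r) = g''(r) + (1/r) g'(r) − (1/r²) g(r)`. -/
noncomputable def Lop (g : ℝ → ℂ) : ℝ → ℂ := fun r =>
  dz (dz g) r + ((r : ℂ))⁻¹ * dz g r - (((r : ℂ)) ^ 2)⁻¹ * g r

/-- Weighted integral over `(0,1)` with values in `[0,∞]`. -/
noncomputable def wInt (h : ℝ → ℝ) : ENNReal :=
  ∫⁻ r in Set.Ioo (0 : ℝ) 1, ENNReal.ofReal (h r)

/-!
Put `f = g / r + g'`, so that `(r g)' = r f` and `𝓛 g = f'`: the three integrals become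
`L = ∫ r |f|²`, `E = ∫ (1 - r²) r |f|²` and `D = ∫ r |f'|²`. Fix `0 < δ ≤ 1/4`. On `(0, 1 - δ)`
the weight `1 - r²` is at least `δ`, so that part of `L` is at most `E / δ`. Since
`(1 - r²) r ≥ δ / 2` on `[1 - 2δ, 1 - δ]`, some `s` there has `|f s|² ≤ 2E / δ²`; integrating
`(|f|²)' = 2⟪f, f'⟫ ≤ |f|² / (4δ) + 4δ |f'|²` from `s` to the point where `|f|²` is maximal on
`[s, 1]` gives `|f|² ≤ 4E / δ² + 16 δ D` on `[1 - δ, 1]`. Hence `L ≤ 5E / δ + 16 δ² D`, and the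
choice `δ = min (1/4, (E / D)^{1/3})` gives the inequality with `C = 84`.
-/

open Set Topology

theorem exists_delta_five_div_add_sixteen_sq_mul_le {e d : ℝ} (he : 0 < e) (hd : 0 ≤ d) :
    ∃ δ, 0 < δ ∧ δ ≤ 1 / 4 ∧
      5 * e / δ + 16 * δ ^ 2 * d ≤ 84 * e ^ ((2 : ℝ) / 3) * d ^ ((1 : ℝ) / 3) + 84 * e := by
  have hmain : 0 ≤ 84 * e ^ ((2 : ℝ) / 3) * d ^ ((1 : ℝ) / 3) := by positivity
  rcases le_or_gt d (64 * e) with hsmall | hlarge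
  · refine ⟨1 / 4, by norm_num, le_rfl, ?_⟩
    linarith
  -- otherwise take `δ = (e / d)^{1/3}`, written as `a / b` with `a³ = e`, `b³ = d`
  have hd' : 0 < d := by linarith
  set a := e ^ ((1 : ℝ) / 3) with ha
  set b := d ^ ((1 : ℝ) / 3) with hb
  have ha0 : 0 < a := by positivity
  have hb0 : 0 < b := by positivity
  have hcube : ∀ x : ℝ, 0 ≤ x → (x ^ ((1 : ℝ) / 3)) ^ 3 = x := fun x hx => by
    rw [← Real.rpow_natCast, ← Real.rpow_mul hx]; norm_num
  have ha3 : a ^ 3 = e := hcube e he.le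
  have hb3 : b ^ 3 = d := hcube d hd
  have ha2 : e ^ ((2 : ℝ) / 3) = a ^ 2 := by
    rw [ha, ← Real.rpow_natCast, ← Real.rpow_mul he.le]; norm_num
  refine ⟨a / b, by positivity, ?_, ?_⟩
  · rw [div_le_iff₀ hb0]
    have : (4 * a) ^ 3 ≤ b ^ 3 := by linarith
    linarith [le_of_pow_le_pow_left₀ three_ne_zero hb0.le this]
  · calc 5 * e / (a / b) + 16 * (a / b) ^ 2 * d = 21 * a ^ 2 * b := by
          rw [← ha3, ← hb3]; field_simp; ring
      _ ≤ 84 * e ^ ((2 : ℝ) / 3) * d ^ ((1 : ℝ) / 3) + 84 * e := by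
          rw [ha2, ← hb]; nlinarith [mul_pos (pow_pos ha0 2) hb0]

section SqNorm

variable {V : Type*} [NormedAddCommGroup V] [InnerProductSpace ℝ V]

theorem sq_norm_sub_sq_norm_le_integral {f F : ℝ → V} {a b c : ℝ} (hab : a ≤ b) (hc : 0 < c)
    (hf : ContinuousOn f (Icc a b)) (hF : ContinuousOn F (Icc a b))
    (hd : ∀ x ∈ Ioo a b, HasDerivAt f (F x) x) :
    ‖f b‖ ^ 2 - ‖f a‖ ^ 2 ≤ ∫ x in a..b, (c * ‖f x‖ ^ 2 + c⁻¹ * ‖F x‖ ^ 2) := by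
  refine intervalIntegral.sub_le_integral_of_hasDeriv_right_of_le hab (hf.norm.pow 2)
    (fun x hx => (hd x hx).norm_sq.hasDerivWithinAt)
    (((hf.norm.pow 2).const_smul c).add ((hF.norm.pow 2).const_smul c⁻¹)).integrableOn_Icc
    fun x _ => ?_
  have hinner : inner ℝ (f x) (F x) ≤ ‖f x‖ * ‖F x‖ := real_inner_le_norm _ _
  have hsq : 0 ≤ (c * ‖f x‖ - ‖F x‖) ^ 2 / c := by positivity
  have hexpand : (c * ‖f x‖ - ‖F x‖) ^ 2 / c
      = c * ‖f x‖ ^ 2 + c⁻¹ * ‖F x‖ ^ 2 - 2 * (‖f x‖ * ‖F x‖) := by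
    field_simp; ring
  linarith

theorem sq_norm_le_two_mul_sq_norm_add_integral {f F : ℝ → V} {s u δ : ℝ} (hs : 1 / 2 ≤ s)
    (hsu : s ≤ u) (hus : u - s ≤ 2 * δ) (hδ : 0 < δ) (hf : ContinuousOn f (Icc s u))
    (hF : ContinuousOn F (Icc s u)) (hd : ∀ x ∈ Ioo s u, HasDerivAt f (F x) x)
    (hmax : IsMaxOn (fun x => ‖f x‖ ^ 2) (Icc s u) u) :
    ‖f u‖ ^ 2 ≤ 2 * ‖f s‖ ^ 2 + 16 * δ * ∫ x in s..u, ‖F x‖ ^ 2 * x := by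
  have hFr : ContinuousOn (fun x => ‖F x‖ ^ 2 * x) (Icc s u) := by fun_prop
  have hgrowth := sq_norm_sub_sq_norm_le_integral hsu (inv_pos.2 (by positivity : 0 < 4 * δ))
    hf hF hd
  have hintegrand : ∫ x in s..u, ((4 * δ)⁻¹ * ‖f x‖ ^ 2 + (4 * δ)⁻¹⁻¹ * ‖F x‖ ^ 2)
      ≤ ∫ x in s..u, ((4 * δ)⁻¹ * ‖f u‖ ^ 2 + 8 * δ * (‖F x‖ ^ 2 * x)) := by
    refine intervalIntegral.integral_mono_on hsu ?_ ?_ fun x hx => ?_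
    · exact ContinuousOn.intervalIntegrable_of_Icc hsu (by fun_prop)
    · exact ContinuousOn.intervalIntegrable_of_Icc hsu (by fun_prop)
    · have hfx : (4 * δ)⁻¹ * ‖f x‖ ^ 2 ≤ (4 * δ)⁻¹ * ‖f u‖ ^ 2 :=
        mul_le_mul_of_nonneg_left (hmax hx) (by positivity)
      have hFx : 4 * δ * ‖F x‖ ^ 2 ≤ 8 * δ * (‖F x‖ ^ 2 * x) := by
        have := mul_le_mul_of_nonneg_left (hs.trans hx.1)
          (by positivity : 0 ≤ 8 * δ * ‖F x‖ ^ 2)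
        linarith
      rw [inv_inv]
      linarith
  have hintegral : ∫ x in s..u, ((4 * δ)⁻¹ * ‖f u‖ ^ 2 + 8 * δ * (‖F x‖ ^ 2 * x))
      = (u - s) * ((4 * δ)⁻¹ * ‖f u‖ ^ 2) + 8 * δ * ∫ x in s..u, ‖F x‖ ^ 2 * x := by
    rw [intervalIntegral.integral_add intervalIntegrable_const
      ((hFr.intervalIntegrable_of_Icc hsu).const_mul _), intervalIntegral.integral_const,
      intervalIntegral.integral_const_mul, smul_eq_mul]
  have hhalf : (u - s) * ((4 * δ)⁻¹ * ‖f u‖ ^ 2) ≤ ‖f u‖ ^ 2 / 2 := by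
    rw [← mul_assoc, div_eq_mul_inv, mul_comm (‖f u‖ ^ 2)]
    gcongr
    rw [mul_inv_le_iff₀ (by positivity)]
    linarith
  linarith

end SqNorm

theorem wInt_congr {h h' : ℝ → ℝ} (hh : ∀ r ∈ Ioo (0 : ℝ) 1, h r = h' r) :
    wInt h = wInt h' :=
  setLIntegral_congr_fun measurableSet_Ioo fun r hr => by rw [hh r hr]

theorem ofReal_intervalIntegral_le_wInt {φ : ℝ → ℝ} {a b : ℝ} (ha : 0 ≤ a) (hab : a ≤ b)
    (hb : b ≤ 1) (hφ : ContinuousOn φ (Icc a b)) (hφ0 : ∀ x ∈ Icc a b, 0 ≤ φ x) :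
    ENNReal.ofReal (∫ x in a..b, φ x) ≤ wInt φ := by
  rw [intervalIntegral.integral_of_le hab,
    ofReal_integral_eq_lintegral_ofReal (hφ.integrableOn_Icc.mono_set Ioc_subset_Icc_self)
      ((ae_restrict_iff' measurableSet_Ioc).2
        (ae_of_all _ fun x hx => hφ0 x (Ioc_subset_Icc_self hx))),
    ← setLIntegral_congr Ioo_ae_eq_Ioc]
  exact lintegral_mono_set (Ioo_subset_Ioo ha (by linarith))

theorem exists_mem_Icc_ofReal_mul_le_wInt {φ : ℝ → ℝ} {a b : ℝ} (ha : 0 ≤ a) (hab : a ≤ b)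
    (hb : b ≤ 1) (hφ : ContinuousOn φ (Icc a b)) :
    ∃ c ∈ Icc a b, ENNReal.ofReal (φ c * (b - a)) ≤ wInt φ := by
  obtain ⟨c, hc, hmin⟩ := isCompact_Icc.exists_isMinOn (nonempty_Icc.2 hab) hφ
  refine ⟨c, hc, ?_⟩
  calc ENNReal.ofReal (φ c * (b - a))
      = ∫⁻ _ in Ioo a b, ENNReal.ofReal (φ c) := by
        rw [setLIntegral_const, Real.volume_Ioo, ENNReal.ofReal_mul' (by linarith)]
    _ ≤ ∫⁻ x in Ioo a b, ENNReal.ofReal (φ x) :=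
        setLIntegral_mono' measurableSet_Ioo fun x hx =>
          ENNReal.ofReal_le_ofReal (hmin (Ioo_subset_Icc_self hx))
    _ ≤ wInt φ := lintegral_mono_set (Ioo_subset_Ioo ha hb)

section Interpolation

variable {V : Type*} [NormedAddCommGroup V] {f F : ℝ → V} {δ e d : ℝ}

theorem exists_sq_norm_le_of_wInt_le (hf : ContinuousOn f (Ioc 0 1)) (hδ : 0 < δ)
    (hδ' : δ ≤ 1 / 4) (hE : wInt (fun r => (1 - r ^ 2) * r * ‖f r‖ ^ 2) ≤ ENNReal.ofReal e)
    (he : 0 ≤ e) :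
    ∃ s ∈ Icc (1 - 2 * δ) (1 - δ), δ ^ 2 * ‖f s‖ ^ 2 ≤ 2 * e := by
  have hsub : Icc (1 - 2 * δ) (1 - δ) ⊆ Ioc 0 1 := Icc_subset_Ioc (by linarith) (by linarith)
  obtain ⟨s, hs, hmin⟩ := exists_mem_Icc_ofReal_mul_le_wInt (by linarith) (by linarith)
    (by linarith) (((continuousOn_const.sub (continuousOn_pow 2)).mul continuousOn_id).mul
      ((hf.norm.pow 2).mono hsub))
  refine ⟨s, hs, ?_⟩
  have hφs : (1 - s ^ 2) * s * ‖f s‖ ^ 2 * δ ≤ e := by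
    have := (ENNReal.ofReal_le_ofReal_iff he).1 (hmin.trans hE)
    rwa [show 1 - δ - (1 - 2 * δ) = δ by ring] at this
  have hweight : δ / 2 ≤ (1 - s ^ 2) * s := by nlinarith [hs.1, hs.2]
  nlinarith [mul_le_mul_of_nonneg_right hweight (sq_nonneg ‖f s‖)]

theorem wInt_mul_sq_norm_eq_zero (hf : ContinuousOn f (Ioc 0 1))
    (hE : wInt (fun r => (1 - r ^ 2) * r * ‖f r‖ ^ 2) = 0) :
    wInt (fun r => r * ‖f r‖ ^ 2) = 0 := by
  have hf' : ContinuousOn f (Ioo 0 1) := hf.mono Ioo_subset_Ioc_self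
  have hmeas : AEMeasurable (fun r => ENNReal.ofReal ((1 - r ^ 2) * r * ‖f r‖ ^ 2))
      (volume.restrict (Ioo 0 1)) :=
    (ContinuousOn.aemeasurable (by fun_prop) measurableSet_Ioo).ennreal_ofReal
  rw [wInt, lintegral_eq_zero_iff' hmeas] at hE
  refine (lintegral_congr_ae ?_).trans lintegral_zero
  filter_upwards [hE, ae_restrict_mem measurableSet_Ioo] with r h0 hr
  have hw : 0 < (1 - r ^ 2) * r := by nlinarith [hr.1, hr.2]
  have hfr : ‖f r‖ ^ 2 ≤ 0 :=
    nonpos_of_mul_nonpos_right (ENNReal.ofReal_eq_zero.1 h0) hw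
  exact ENNReal.ofReal_eq_zero.2 (mul_nonpos_of_nonneg_of_nonpos hr.1.le hfr)

variable [InnerProductSpace ℝ V]

theorem sq_norm_le_of_wInt_le (hf : ContinuousOn f (Ioc 0 1)) (hF : ContinuousOn F (Ioc 0 1))
    (hd : ∀ r ∈ Ioo (0 : ℝ) 1, HasDerivAt f (F r) r) (hδ : 0 < δ) (hδ' : δ ≤ 1 / 4)
    (hE : wInt (fun r => (1 - r ^ 2) * r * ‖f r‖ ^ 2) ≤ ENNReal.ofReal e) (he : 0 ≤ e)
    (hD : wInt (fun r => ‖F r‖ ^ 2 * r) ≤ ENNReal.ofReal d) (hd0 : 0 ≤ d) :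
    ∀ r ∈ Icc (1 - δ) 1, ‖f r‖ ^ 2 ≤ 4 * e / δ ^ 2 + 16 * δ * d := by
  obtain ⟨s, ⟨hs₁, hs₂⟩, hfs⟩ := exists_sq_norm_le_of_wInt_le hf hδ hδ' hE he
  obtain ⟨u, ⟨hsu, hu1⟩, hmax⟩ := isCompact_Icc.exists_isMaxOn (nonempty_Icc.2 (by linarith))
    ((hf.norm.pow 2).mono (Icc_subset_Ioc (by linarith) le_rfl : Icc s 1 ⊆ Ioc 0 1))
  have hsub : Icc s u ⊆ Ioc 0 1 := Icc_subset_Ioc (by linarith) hu1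
  have hFd : ∫ x in s..u, ‖F x‖ ^ 2 * x ≤ d :=
    (ENNReal.ofReal_le_ofReal_iff hd0).1 <| (ofReal_intervalIntegral_le_wInt (by linarith) hsu
      hu1 (((hF.mono hsub).norm.pow 2).mul continuousOn_id)
      fun x hx => mul_nonneg (sq_nonneg _) (show 0 ≤ x by linarith [hx.1])).trans hD
  have hfu := sq_norm_le_two_mul_sq_norm_add_integral (by linarith) hsu (by linarith) hδ
    (hf.mono hsub) (hF.mono hsub) (fun x hx => hd x ⟨by linarith [hx.1], by linarith [hx.2]⟩)
    (hmax.on_subset (Icc_subset_Icc_right hu1))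
  have hfs' : ‖f s‖ ^ 2 ≤ 2 * e / δ ^ 2 := by rw [le_div_iff₀ (by positivity)]; linarith
  have hδd : 16 * δ * ∫ x in s..u, ‖F x‖ ^ 2 * x ≤ 16 * δ * d := by gcongr
  intro r hr
  have hfr : ‖f r‖ ^ 2 ≤ ‖f u‖ ^ 2 := hmax ⟨by linarith [hr.1], hr.2⟩
  have : 4 * e / δ ^ 2 = 2 * (2 * e / δ ^ 2) := by ring
  linarith

theorem wInt_mul_sq_norm_le_of_delta (hf : ContinuousOn f (Ioc 0 1))
    (hF : ContinuousOn F (Ioc 0 1)) (hd : ∀ r ∈ Ioo (0 : ℝ) 1, HasDerivAt f (F r) r)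
    (hδ : 0 < δ) (hδ' : δ ≤ 1 / 4)
    (hE : wInt (fun r => (1 - r ^ 2) * r * ‖f r‖ ^ 2) ≤ ENNReal.ofReal e) (he : 0 ≤ e)
    (hD : wInt (fun r => ‖F r‖ ^ 2 * r) ≤ ENNReal.ofReal d) (hd0 : 0 ≤ d) :
    wInt (fun r => r * ‖f r‖ ^ 2) ≤ ENNReal.ofReal (5 * e / δ + 16 * δ ^ 2 * d) := by
  have hsup := sq_norm_le_of_wInt_le hf hF hd hδ hδ' hE he hD hd0
  have hinner : ∫⁻ r in Ioo 0 (1 - δ), ENNReal.ofReal (r * ‖f r‖ ^ 2)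
      ≤ ENNReal.ofReal δ⁻¹ * ENNReal.ofReal e :=
    calc ∫⁻ r in Ioo 0 (1 - δ), ENNReal.ofReal (r * ‖f r‖ ^ 2)
        ≤ ∫⁻ r in Ioo 0 (1 - δ),
            ENNReal.ofReal δ⁻¹ * ENNReal.ofReal ((1 - r ^ 2) * r * ‖f r‖ ^ 2) := by
          refine setLIntegral_mono' measurableSet_Ioo fun r hr => ?_
          rw [← ENNReal.ofReal_mul (by positivity)]
          refine ENNReal.ofReal_le_ofReal ?_
          have hweight : δ * r ≤ (1 - r ^ 2) * r := by nlinarith [hr.1, hr.2]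
          rw [le_inv_mul_iff₀ hδ, ← mul_assoc]
          exact mul_le_mul_of_nonneg_right hweight (sq_nonneg _)
      _ = ENNReal.ofReal δ⁻¹
            * ∫⁻ r in Ioo 0 (1 - δ), ENNReal.ofReal ((1 - r ^ 2) * r * ‖f r‖ ^ 2) :=
          lintegral_const_mul' _ _ ENNReal.ofReal_ne_top
      _ ≤ ENNReal.ofReal δ⁻¹ * ENNReal.ofReal e := by
          gcongr
          exact (lintegral_mono_set (Ioo_subset_Ioo le_rfl (by linarith))).trans hE
  have hboundary : ∫⁻ r in Ico (1 - δ) 1, ENNReal.ofReal (r * ‖f r‖ ^ 2)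
      ≤ ENNReal.ofReal (4 * e / δ ^ 2 + 16 * δ * d) * ENNReal.ofReal δ :=
    calc ∫⁻ r in Ico (1 - δ) 1, ENNReal.ofReal (r * ‖f r‖ ^ 2)
        ≤ ∫⁻ _ in Ico (1 - δ) 1, ENNReal.ofReal (4 * e / δ ^ 2 + 16 * δ * d) := by
          refine setLIntegral_mono' measurableSet_Ico fun r hr => ENNReal.ofReal_le_ofReal ?_
          have hfr := hsup r (Ico_subset_Icc_self hr)
          have hr0 : 0 ≤ r := by linarith [hr.1]
          nlinarith [mul_le_mul_of_nonneg_right hr.2.le (sq_nonneg ‖f r‖)]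
      _ = _ := by rw [setLIntegral_const, Real.volume_Ico, sub_sub_cancel]
  calc wInt (fun r => r * ‖f r‖ ^ 2)
      = (∫⁻ r in Ioo 0 (1 - δ), ENNReal.ofReal (r * ‖f r‖ ^ 2))
          + ∫⁻ r in Ico (1 - δ) 1, ENNReal.ofReal (r * ‖f r‖ ^ 2) := by
        rw [wInt, ← Ioo_union_Ico_eq_Ioo (by linarith) (by linarith : 1 - δ ≤ 1),
          lintegral_union measurableSet_Ico (Ico_disjoint_Ico_same.mono_left Ioo_subset_Ico_self)]
    _ ≤ ENNReal.ofReal δ⁻¹ * ENNReal.ofReal e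
          + ENNReal.ofReal (4 * e / δ ^ 2 + 16 * δ * d) * ENNReal.ofReal δ :=
        add_le_add hinner hboundary
    _ = ENNReal.ofReal (5 * e / δ + 16 * δ ^ 2 * d) := by
        rw [← ENNReal.ofReal_mul (by positivity), ← ENNReal.ofReal_mul (by positivity),
          ← ENNReal.ofReal_add (by positivity) (by positivity)]
        congr 1
        field_simp
        ring

theorem wInt_mul_sq_norm_le (hf : ContinuousOn f (Ioc 0 1)) (hF : ContinuousOn F (Ioc 0 1))
    (hd : ∀ r ∈ Ioo (0 : ℝ) 1, HasDerivAt f (F r) r) :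
    wInt (fun r => r * ‖f r‖ ^ 2)
      ≤ ENNReal.ofReal 84 * wInt (fun r => (1 - r ^ 2) * r * ‖f r‖ ^ 2) ^ ((2 : ℝ) / 3)
          * wInt (fun r => ‖F r‖ ^ 2 * r) ^ ((1 : ℝ) / 3)
        + ENNReal.ofReal 84 * wInt (fun r => (1 - r ^ 2) * r * ‖f r‖ ^ 2) := by
  set E := wInt (fun r => (1 - r ^ 2) * r * ‖f r‖ ^ 2)
  set D := wInt (fun r => ‖F r‖ ^ 2 * r)
  rcases eq_or_ne E 0 with hE0 | hE0
  · rw [wInt_mul_sq_norm_eq_zero hf hE0]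
    exact zero_le
  rcases eq_or_ne E ⊤ with hEtop | hEtop
  · simp [hEtop]
  rcases eq_or_ne D ⊤ with hDtop | hDtop
  · have hpos : ENNReal.ofReal 84 * E ^ ((2 : ℝ) / 3) ≠ 0 :=
      mul_ne_zero (by norm_num) (ENNReal.rpow_pos (pos_iff_ne_zero.2 hE0) hEtop).ne'
    rw [hDtop, ENNReal.top_rpow_of_pos (by norm_num), ENNReal.mul_top hpos, top_add]
    exact le_top
  obtain ⟨δ, hδ, hδ', hbound⟩ := exists_delta_five_div_add_sixteen_sq_mul_le
    (ENNReal.toReal_pos hE0 hEtop) (ENNReal.toReal_nonneg (a := D))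
  calc wInt (fun r => r * ‖f r‖ ^ 2)
      ≤ ENNReal.ofReal (5 * E.toReal / δ + 16 * δ ^ 2 * D.toReal) :=
        wInt_mul_sq_norm_le_of_delta hf hF hd hδ hδ' (ENNReal.ofReal_toReal hEtop).ge
          ENNReal.toReal_nonneg (ENNReal.ofReal_toReal hDtop).ge ENNReal.toReal_nonneg
    _ ≤ ENNReal.ofReal (84 * E.toReal ^ ((2 : ℝ) / 3) * D.toReal ^ ((1 : ℝ) / 3)
          + 84 * E.toReal) := ENNReal.ofReal_le_ofReal hbound
    _ = ENNReal.ofReal 84 * E ^ ((2 : ℝ) / 3) * D ^ ((1 : ℝ) / 3)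
          + ENNReal.ofReal 84 * E := by
        rw [ENNReal.ofReal_add (by positivity) (by positivity),
          ENNReal.ofReal_mul (by positivity), ENNReal.ofReal_mul (by norm_num),
          ENNReal.ofReal_mul (by norm_num),
          ← ENNReal.ofReal_rpow_of_nonneg ENNReal.toReal_nonneg (by norm_num),
          ← ENNReal.ofReal_rpow_of_nonneg ENNReal.toReal_nonneg (by norm_num),
          ENNReal.ofReal_toReal hEtop, ENNReal.ofReal_toReal hDtop]

end Interpolation

section Radial

variable {g : ℝ → ℂ}

theorem dz_ofReal_mul {r : ℝ} (hg : DifferentiableWithinAt ℝ g (Ioc 0 1) r) (hr : r ∈ Ioc 0 1) :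
    dz (fun s => (s : ℂ) * g s) r = g r + r * dz g r := by
  have h := (Complex.ofRealCLM.hasDerivAt (x := r)).hasDerivWithinAt.mul hg.hasDerivWithinAt
  rw [Complex.ofRealCLM_apply, Complex.ofReal_one, one_mul] at h
  exact h.derivWithin (uniqueDiffOn_Ioc 0 1 r hr)

theorem continuousOn_ofReal_inv : ContinuousOn (fun s : ℝ => (s : ℂ)⁻¹) (Ioc 0 1) :=
  Complex.continuous_ofReal.continuousOn.inv₀ fun _ hs => Complex.ofReal_ne_zero.2 hs.1.ne'

theorem continuousOn_inv_mul_add_dz (hg : ContDiffOn ℝ 2 g (Ioc 0 1)) :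
    ContinuousOn (fun s : ℝ => (s : ℂ)⁻¹ * g s + dz g s) (Ioc 0 1) :=
  (continuousOn_ofReal_inv.mul hg.continuousOn).add
    (hg.continuousOn_derivWithin (uniqueDiffOn_Ioc 0 1) (by norm_num))

theorem continuousOn_Lop (hg : ContDiffOn ℝ 2 g (Ioc 0 1)) :
    ContinuousOn (Lop g) (Ioc 0 1) := by
  have hg1 : ContDiffOn ℝ 1 (dz g) (Ioc 0 1) :=
    hg.derivWithin (uniqueDiffOn_Ioc 0 1) (by norm_num)
  exact ((hg1.continuousOn_derivWithin (uniqueDiffOn_Ioc 0 1) le_rfl).add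
    (continuousOn_ofReal_inv.mul hg1.continuousOn)).sub
    (((Complex.continuous_ofReal.pow 2).continuousOn.inv₀ fun s hs =>
      pow_ne_zero 2 (Complex.ofReal_ne_zero.2 hs.1.ne')).mul hg.continuousOn)

theorem hasDerivAt_inv_mul_add_dz (hg : ContDiffOn ℝ 2 g (Ioc 0 1)) {r : ℝ} (hr : r ∈ Ioo 0 1) :
    HasDerivAt (fun s : ℝ => (s : ℂ)⁻¹ * g s + dz g s) (Lop g r) r := by
  have hnhds : Ioc (0 : ℝ) 1 ∈ 𝓝 r := Ioc_mem_nhds hr.1 hr.2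
  have hg1 : ContDiffOn ℝ 1 (dz g) (Ioc 0 1) :=
    hg.derivWithin (uniqueDiffOn_Ioc 0 1) (by norm_num)
  have hgr : HasDerivAt g (dz g r) r :=
    ((hg.differentiableOn (by norm_num)) r (Ioo_subset_Ioc_self hr)).hasDerivWithinAt.hasDerivAt
      hnhds
  have hg1r : HasDerivAt (dz g) (dz (dz g) r) r :=
    ((hg1.differentiableOn one_ne_zero) r (Ioo_subset_Ioc_self hr)).hasDerivWithinAt.hasDerivAt
      hnhds
  have hinv : HasDerivAt (fun s : ℝ => (s : ℂ)⁻¹) (-((r : ℂ) ^ 2)⁻¹) r :=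
    (hasDerivAt_inv (Complex.ofReal_ne_zero.2 hr.1.ne')).comp_ofReal
  exact ((hinv.mul hgr).add hg1r).congr_deriv (by unfold Lop; ring)

end Radial

/-- Lemma A.4, second weighted interpolation inequality: there is `C > 0` such that
for every `g` twice continuously differentiable on `[0,1]`,
`∫₀¹ |(d/dr)(r g)|² (1/r) dr
  ≤ C (∫₀¹ ((1−r²)/r)|(d/dr)(r g)|² dr)^{2/3} (∫₀¹ |𝓛g|² r dr)^{1/3}
    + C ∫₀¹ ((1−r²)/r)|(d/dr)(r g)|² dr`, in `[0,∞]`. -/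
theorem weighted_interpolation_second :
    ∃ C : ℝ, 0 < C ∧ ∀ g : ℝ → ℂ, ContDiffOn ℝ 2 g (Set.Icc 0 1) →
      wInt (fun r => ‖dz (fun s => (s : ℂ) * g s) r‖ ^ 2 / r)
        ≤ ENNReal.ofReal C
              * (wInt (fun r => ((1 - r ^ 2) / r) * ‖dz (fun s => (s : ℂ) * g s) r‖ ^ 2))
                  ^ ((2 : ℝ) / 3)
              * (wInt (fun r => ‖Lop g r‖ ^ 2 * r)) ^ ((1 : ℝ) / 3)
          + ENNReal.ofReal C
              * wInt (fun r => ((1 - r ^ 2) / r) * ‖dz (fun s => (s : ℂ) * g s) r‖ ^ 2) := by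
  refine ⟨84, by norm_num, fun g hg => ?_⟩
  have hg' : ContDiffOn ℝ 2 g (Ioc 0 1) := hg.mono Ioc_subset_Icc_self
  set f : ℝ → ℂ := fun s => (s : ℂ)⁻¹ * g s + dz g s
  have hnorm : ∀ r ∈ Ioo (0 : ℝ) 1,
      ‖dz (fun s => (s : ℂ) * g s) r‖ ^ 2 = r ^ 2 * ‖f r‖ ^ 2 := fun r hr => by
    have hr0 : (r : ℂ) ≠ 0 := Complex.ofReal_ne_zero.2 hr.1.ne'
    rw [dz_ofReal_mul ((hg'.differentiableOn (by norm_num)) r (Ioo_subset_Ioc_self hr))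
      (Ioo_subset_Ioc_self hr), show g r + r * dz g r = r * f r by simp only [f]; field_simp,
      norm_mul, Complex.norm_real, Real.norm_of_nonneg hr.1.le, mul_pow]
  have hL : wInt (fun r => ‖dz (fun s => (s : ℂ) * g s) r‖ ^ 2 / r)
      = wInt (fun r => r * ‖f r‖ ^ 2) :=
    wInt_congr fun r hr => by rw [hnorm r hr]; field_simp [hr.1.ne']
  have hE : wInt (fun r => ((1 - r ^ 2) / r) * ‖dz (fun s => (s : ℂ) * g s) r‖ ^ 2)
      = wInt (fun r => (1 - r ^ 2) * r * ‖f r‖ ^ 2) :=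
    wInt_congr fun r hr => by rw [hnorm r hr]; field_simp [hr.1.ne']
  rw [hL, hE]
  exact wInt_mul_sq_norm_le (continuousOn_inv_mul_add_dz hg') (continuousOn_Lop hg')
    fun r hr => hasDerivAt_inv_mul_add_dz hg' hr
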